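/- Let X ⊆ ℝ² be compact with positive Lebesgue measure, and suppose there is a finite (or countable discrete, uniformly bounded degree) set Z ⊆ ℝ² such that the translates {X+z : z ∈ Z} form an odd cover of ℝ² with (lower) average density ρ. Then for every finite odd-cardinality set K ⊆ ℝ², the Lebesgue measure of the set of points covered an odd number of times by {X+k : k ∈ K} is at least μ(X)/ρ. -/

import Mathlib

open scoped Classical ENNReal
open MeasureTheory Filter

/-- The axis-parallel `n × n` square centered at the origin. -/
def Qsq (n : ℕ) : Set (ℝ × ℝ) :=
  Set.Icc (-(n : ℝ) / 2, -(n : ℝ) / 2) ((n : ℝ) / 2, (n : ℝ) / 2)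

/-!
Since `#K` is odd, at almost every `p` each `p - k` (`k ∈ K`) is covered an odd number of times by
the translates `X + z`, and double counting the pairs `(k, z)` produces a `z ∈ Z` with `p - z` in
the odd set `Y` of `K`. So the translates `Y + z` also cover the plane. If `N` translates `Y + z`
meet the square `Qₙ`, then `n² ≤ N μ(Y)`, while the corresponding `X + z` lie in a square only
`O(1)` larger and contribute `N μ(X)` to the density sum there. Dividing by `n²` and letting
`n → ∞` gives `μ(X) ≤ ρ μ(Y)`. Bounded multiplicity makes `Z` locally finite, so `N` is finite.
-/

theorem exists_odd_card_filter_of_odd {G : Type*} [AddCommGroup G] {X Z : Set G} {K : Finset G}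
    (hK : Odd K.card) {p : G} (h : ∀ k ∈ K, Odd (Set.ncard {z | z ∈ Z ∧ p - k - z ∈ X})) :
    ∃ z ∈ Z, Odd (K.filter fun k => p - z - k ∈ X).card := by
  have hT : (⋃ k ∈ K, {z | z ∈ Z ∧ p - k - z ∈ X}).Finite :=
    K.finite_toSet.biUnion fun k hk => Set.finite_of_ncard_pos (h k hk).pos
  set T := hT.toFinset
  have hcard (k) (hk : k ∈ K) :
      Set.ncard {z | z ∈ Z ∧ p - k - z ∈ X} = (T.filter fun z => p - k - z ∈ X).card := by
    rw [← Set.ncard_coe_finset]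
    congr 1
    ext z
    simp only [T, Finset.coe_filter, Set.Finite.mem_toFinset, Set.mem_iUnion₂]
    exact ⟨fun hz => ⟨⟨k, hk, hz⟩, hz.2⟩, fun ⟨⟨_, _, hz, _⟩, hzk⟩ => ⟨hz, hzk⟩⟩
  have hsum : Odd (∑ z ∈ T, (K.filter fun k => p - k - z ∈ X).card) := by
    have hswap := Finset.sum_card_bipartiteAbove_eq_sum_card_bipartiteBelow
      (fun k z => p - k - z ∈ X) (s := K) (t := T)
    simp only [Finset.bipartiteAbove, Finset.bipartiteBelow] at hswap
    rw [← hswap, Finset.odd_sum_iff_odd_card_odd]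
    convert hK using 2
    exact Finset.filter_true_of_mem fun k hk => hcard k hk ▸ h k hk
  obtain ⟨z, hz⟩ := Finset.card_pos.1 ((Finset.odd_sum_iff_odd_card_odd _).1 hsum).pos
  rw [Finset.mem_filter] at hz
  refine ⟨z, ?_, by simpa only [sub_right_comm p z] using hz.2⟩
  obtain ⟨k, -, hzk, -⟩ := Set.mem_iUnion₂.1 (hT.mem_toFinset.1 hz.1)
  exact hzk

section Translates

variable {G : Type*} [AddCommGroup G] [MeasurableSpace G] [MeasurableAdd G]
  (μ : Measure G) [μ.IsAddRightInvariant]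

theorem measure_image_add_right (z : G) (A : Set G) : μ ((· + z) '' A) = μ A := by
  rw [Set.image_add_right, measure_preimage_add_right]

theorem card_mul_measure_le_of_ncard_le {X Z : Set G} (hX : MeasurableSet X) {d : ℕ}
    (hfin : ∀ᵐ p ∂μ, {z | z ∈ Z ∧ p - z ∈ X}.Finite)
    (hbd : ∀ p, Set.ncard {z | z ∈ Z ∧ p - z ∈ X} ≤ d) {F : Finset G} (hF : ↑F ⊆ Z) :
    (F.card : ℝ≥0∞) * μ X ≤ d * μ (⋃ z ∈ F, (· + z) '' X) := by
  have hmeas (z : G) : MeasurableSet ((· + z) '' X) := by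
    rw [Set.image_add_right]; exact measurable_add_const _ hX
  have hcount (p : G) :
      ∑ z ∈ F, ((· + z) '' X).indicator 1 p = ((F.filter fun z => p - z ∈ X).card : ℝ≥0∞) := by
    rw [Finset.card_filter, Nat.cast_sum]
    refine Finset.sum_congr rfl fun z _ => ?_
    simp [Set.indicator_apply, Set.image_add_right, sub_eq_add_neg]
  calc (F.card : ℝ≥0∞) * μ X = ∑ z ∈ F, μ ((· + z) '' X) := by
        simp only [measure_image_add_right, Finset.sum_const, nsmul_eq_mul]
    _ = ∑ z ∈ F, ∫⁻ p, ((· + z) '' X).indicator 1 p ∂μ :=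
        Finset.sum_congr rfl fun z _ => (lintegral_indicator_one (hmeas z)).symm
    _ = ∫⁻ p, ∑ z ∈ F, ((· + z) '' X).indicator 1 p ∂μ :=
        (lintegral_finsetSum _ fun z _ => measurable_one.indicator (hmeas z)).symm
    _ ≤ ∫⁻ p, (⋃ z ∈ F, (· + z) '' X).indicator (fun _ => (d : ℝ≥0∞)) p ∂μ := by
        refine lintegral_mono_ae ?_
        filter_upwards [hfin] with p hp
        by_cases hpU : p ∈ ⋃ z ∈ F, (· + z) '' X
        · rw [Set.indicator_of_mem hpU, hcount]
          have hsub : ↑(F.filter fun z => p - z ∈ X) ⊆ {z | z ∈ Z ∧ p - z ∈ X} :=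
            fun z hz => by
              rw [Finset.coe_filter] at hz
              exact ⟨hF hz.1, hz.2⟩
          exact_mod_cast (Set.ncard_coe_finset _ ▸ Set.ncard_le_ncard hsub hp).trans (hbd p)
        · rw [Set.indicator_of_notMem hpU]
          refine (Finset.sum_eq_zero fun z hz => Set.indicator_of_notMem ?_ _).le
          exact fun h => hpU (Set.mem_biUnion hz h)
    _ ≤ d * μ (⋃ z ∈ F, (· + z) '' X) := lintegral_indicator_const_le _ _

theorem finite_of_image_add_subset {X Z W B : Set G} (hX : MeasurableSet X) (hX0 : μ X ≠ 0)
    {d : ℕ} (hfin : ∀ᵐ p ∂μ, {z | z ∈ Z ∧ p - z ∈ X}.Finite)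
    (hbd : ∀ p, Set.ncard {z | z ∈ Z ∧ p - z ∈ X} ≤ d) (hWZ : W ⊆ Z) (hB : μ B ≠ ⊤)
    (hWB : ∀ z ∈ W, (· + z) '' X ⊆ B) : W.Finite := by
  by_contra hW
  obtain ⟨N, hN⟩ :=
    ENNReal.exists_nat_mul_gt hX0 (ENNReal.mul_ne_top (ENNReal.natCast_ne_top d) hB)
  obtain ⟨F, hFW, rfl⟩ := (Set.not_finite.1 hW).exists_subset_card_eq N
  refine (card_mul_measure_le_of_ncard_le μ hX hfin hbd (hFW.trans hWZ)).not_gt ?_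
  calc (d : ℝ≥0∞) * μ (⋃ z ∈ F, (· + z) '' X) ≤ d * μ B :=
        by gcongr; exact Set.iUnion₂_subset fun z hz => hWB z (hFW hz)
    _ < F.card * μ X := hN

theorem ae_exists_odd_card_filter {X Z : Set G}
    (hodd : ∀ᵐ p ∂μ, Odd (Set.ncard {z | z ∈ Z ∧ p - z ∈ X})) {K : Finset G} (hK : Odd K.card) :
    ∀ᵐ p ∂μ, ∃ z ∈ Z, Odd (K.filter fun k => p - z - k ∈ X).card := by
  have hshift : ∀ᵐ p ∂μ, ∀ k ∈ K, Odd (Set.ncard {z | z ∈ Z ∧ p - k - z ∈ X}) :=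
    (Filter.eventually_all_finset K).2 fun k _ =>
      (measurePreserving_sub_right μ k).quasiMeasurePreserving.ae hodd
  filter_upwards [hshift] with p hp
  exact exists_odd_card_filter_of_odd hK hp

end Translates

theorem Qsq_eq_closedBall (n : ℕ) : Qsq n = Metric.closedBall 0 ((n : ℝ) / 2) := by
  ext p
  simp only [Qsq, Set.mem_Icc, Prod.le_def, mem_closedBall_zero_iff, Prod.norm_def,
    Real.norm_eq_abs, max_le_iff, abs_le, neg_div]
  tauto

theorem volume_Qsq (n : ℕ) : volume (Qsq n) = (n : ℝ≥0∞) ^ 2 := by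
  rw [Qsq, ← Set.Icc_prod_Icc, Measure.volume_eq_prod, Measure.prod_prod, Real.volume_Icc,
    ← sq, neg_div, sub_neg_eq_add, add_halves, ENNReal.ofReal_natCast]

theorem add_mem_Qsq {a b : ℕ} {p q : ℝ × ℝ} (hp : p ∈ Qsq a) (hq : q ∈ Qsq b) :
    p + q ∈ Qsq (a + b) := by
  rw [Qsq_eq_closedBall, mem_closedBall_zero_iff] at *
  push_cast
  linarith [norm_add_le p q]

theorem neg_mem_Qsq {n : ℕ} {p : ℝ × ℝ} (hp : p ∈ Qsq n) : -p ∈ Qsq n := by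
  rwa [Qsq_eq_closedBall, mem_closedBall_zero_iff, norm_neg, ← mem_closedBall_zero_iff,
    ← Qsq_eq_closedBall]

theorem image_add_subset_Qsq {A : Set (ℝ × ℝ)} {a b : ℕ} (hA : A ⊆ Qsq a) {z : ℝ × ℝ}
    (hz : z ∈ Qsq b) : (· + z) '' A ⊆ Qsq (a + b) := by
  rintro _ ⟨x, hx, rfl⟩
  exact add_mem_Qsq (hA hx) hz

theorem Bornology.IsBounded.exists_subset_Qsq {s : Set (ℝ × ℝ)} (hs : Bornology.IsBounded s) :
    ∃ R : ℕ, s ⊆ Qsq R := by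
  obtain ⟨r, hr⟩ := hs.subset_closedBall 0
  obtain ⟨R, hR⟩ := exists_nat_ge (2 * r)
  refine ⟨R, hr.trans ?_⟩
  rw [Qsq_eq_closedBall]
  exact Metric.closedBall_subset_closedBall (by linarith)

theorem volume_Qsq_ne_top (n : ℕ) : volume (Qsq n) ≠ ⊤ := by
  rw [volume_Qsq]
  exact ENNReal.pow_ne_top (ENNReal.natCast_ne_top n)

theorem sq_le_card_mul_volume {Y Z : Set (ℝ × ℝ)} {R n : ℕ} (hY : Y ⊆ Qsq R)
    (hcov : ∀ᵐ p, ∃ z ∈ Z, p - z ∈ Y) {F : Finset Z}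
    (hF : ∀ z : Z, (z : ℝ × ℝ) ∈ Qsq (n + R) → z ∈ F) :
    (n : ℝ≥0∞) ^ 2 ≤ F.card * volume Y := by
  calc (n : ℝ≥0∞) ^ 2 = volume (Qsq n) := (volume_Qsq n).symm
    _ ≤ volume (⋃ z ∈ F, (· + (z : ℝ × ℝ)) '' Y) := by
        refine measure_mono_ae ?_
        filter_upwards [hcov] with p ⟨z, hzZ, hzY⟩ hp
        have hz : z ∈ Qsq (n + R) := by simpa using add_mem_Qsq hp (neg_mem_Qsq (hY hzY))
        exact Set.mem_biUnion (hF ⟨z, hzZ⟩ hz) ⟨p - z, hzY, sub_add_cancel p z⟩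
    _ ≤ ∑ z ∈ F, volume ((· + (z : ℝ × ℝ)) '' Y) := measure_biUnion_finset_le F _
    _ = F.card * volume Y := by
        simp only [measure_image_add_right, Finset.sum_const, nsmul_eq_mul]

theorem card_mul_volume_le_tsum {X Z : Set (ℝ × ℝ)} {R m : ℕ} (hX : X ⊆ Qsq R) (F : Finset Z)
    (hF : ∀ z ∈ F, (z : ℝ × ℝ) ∈ Qsq m) :
    F.card * volume X ≤ ∑' z : Z, volume (Qsq (R + m) ∩ (· + (z : ℝ × ℝ)) '' X) := by
  calc F.card * volume X = ∑ z ∈ F, volume (Qsq (R + m) ∩ (· + (z : ℝ × ℝ)) '' X) := by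
        rw [Finset.sum_congr rfl fun z hz => by
          rw [Set.inter_eq_self_of_subset_right (image_add_subset_Qsq hX (hF z hz)),
            measure_image_add_right], Finset.sum_const, nsmul_eq_mul]
    _ ≤ _ := ENNReal.sum_le_tsum F

theorem le_liminf_div_sq_mul {S : ℕ → ℝ≥0∞} {a b : ℝ≥0∞} (hb : b ≠ ⊤) (C : ℕ)
    (h : ∀ n : ℕ, (n : ℝ≥0∞) ^ 2 * a ≤ S (n + C) * b) :
    a ≤ liminf (fun m : ℕ => S m / (m : ℝ≥0∞) ^ 2) atTop * b := by
  have hratio : Tendsto (fun n : ℕ => (n : ℝ≥0∞) / (n + C)) atTop (nhds 1) := by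
    refine (ENNReal.tendsto_coe.2 (tendsto_natCast_div_add_atTop (C : NNReal))).congr' ?_
    filter_upwards [eventually_ge_atTop 1] with n hn
    rw [ENNReal.coe_div (by positivity)]
    push_cast
    rfl
  have hlim : Tendsto (fun n : ℕ => ((n : ℝ≥0∞) / (n + C)) ^ 2 * a) atTop (nhds a) := by
    simpa using ENNReal.Tendsto.mul_const (ENNReal.Tendsto.pow hratio (n := 2)) (b := a)
      (Or.inl (pow_ne_zero 2 one_ne_zero))
  rw [mul_comm _ b, ← ENNReal.liminf_mul_const_of_ne_top hb, ← liminf_nat_add _ C,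
    ← hlim.liminf_eq]
  refine liminf_le_liminf (Eventually.of_forall fun n => ?_)
  simp only [div_eq_mul_inv, mul_pow, ENNReal.inv_pow, Nat.cast_add]
  calc _ = ((n : ℝ≥0∞) ^ 2 * a) * ((n : ℝ≥0∞) + C)⁻¹ ^ 2 := by ring
    _ ≤ (S (n + C) * b) * ((n : ℝ≥0∞) + C)⁻¹ ^ 2 := mul_le_mul_left (h n) _
    _ = _ := by ring

theorem odd_cover_lemma (X : Set (ℝ × ℝ)) (hXc : IsCompact X) (hXpos : 0 < volume X)
    (Z : Set (ℝ × ℝ)) (d : ℕ)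
    (hbd : ∀ p : ℝ × ℝ, Set.ncard {z | z ∈ Z ∧ p - z ∈ X} ≤ d)
    (hodd : ∀ᵐ p : ℝ × ℝ ∂volume, Odd (Set.ncard {z | z ∈ Z ∧ p - z ∈ X}))
    (ρ : ℝ≥0∞)
    (hρ : ρ = liminf (fun n : ℕ =>
      (∑' z : Z, volume (Qsq n ∩ ((fun x => x + (z : ℝ × ℝ)) '' X))) / (n : ℝ≥0∞) ^ 2) atTop)
    (K : Finset (ℝ × ℝ)) (hK : Odd K.card) :
    volume X / ρ ≤ volume {p : ℝ × ℝ | Odd ((K.filter (fun k => p - k ∈ X)).card)} := by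
  set Y := {p : ℝ × ℝ | Odd ((K.filter (fun k => p - k ∈ X)).card)}
  obtain ⟨RX, hRX⟩ := hXc.isBounded.exists_subset_Qsq
  obtain ⟨RK, hRK⟩ := K.finite_toSet.isBounded.exists_subset_Qsq
  have hY : Y ⊆ Qsq (RX + RK) := fun p hp => by
    obtain ⟨k, hk⟩ := Finset.card_pos.1 hp.pos
    rw [Finset.mem_filter] at hk
    simpa using add_mem_Qsq (hRX hk.2) (hRK hk.1)
  have hfin : ∀ᵐ p, {z | z ∈ Z ∧ p - z ∈ X}.Finite :=
    hodd.mono fun p hp => Set.finite_of_ncard_pos hp.pos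
  have hcov : ∀ᵐ p, ∃ z ∈ Z, p - z ∈ Y := ae_exists_odd_card_filter volume hodd hK
  have hZ (m : ℕ) : {z : Z | (z : ℝ × ℝ) ∈ Qsq m}.Finite :=
    ((finite_of_image_add_subset volume hXc.measurableSet hXpos.ne' hfin hbd
      Set.inter_subset_left (volume_Qsq_ne_top (RX + m))
      fun z hz => image_add_subset_Qsq hRX hz.2).preimage Subtype.val_injective.injOn).subset
      fun z hz => ⟨z.2, hz⟩
  have hbox (n : ℕ) : (n : ℝ≥0∞) ^ 2 * volume X ≤
      (∑' z : Z, volume (Qsq (RX + (n + (RX + RK))) ∩ ((fun x => x + (z : ℝ × ℝ)) '' X))) *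
        volume Y := by
    set F := (hZ (n + (RX + RK))).toFinset
    calc (n : ℝ≥0∞) ^ 2 * volume X ≤ (F.card * volume Y) * volume X :=
          mul_le_mul_left (sq_le_card_mul_volume hY hcov fun z hz => (hZ _).mem_toFinset.2 hz) _
      _ = (F.card * volume X) * volume Y := by ring
      _ ≤ _ := mul_le_mul_left
          (card_mul_volume_le_tsum hRX F fun z hz => (hZ _).mem_toFinset.1 hz) _
  subst hρ
  exact ENNReal.div_le_of_le_mul' (le_liminf_div_sq_mul
    ((measure_mono hY).trans_lt (volume_Qsq_ne_top _).lt_top).ne (RX + (RX + RK))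
    fun n => by rw [add_left_comm]; exact hbox n)
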